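/- arXiv:1804.05558 — 2 statements merged into one kernel-verified Lean document; each statement's English description precedes it below -/
import Mathlib

section
/- Let $\vec p=(p_1,\dots,p_n)\in(0,1]^n$ and set $p_-:=\min_i p_i$. Then for any sequence $\{\lambda_i\}_{i\in\mathbb{N}}\subset\mathbb{C}$ and any sequence of anisotropic balls $\{B_i\}_{i\in\mathbb{N}}\subset\mathfrak B$, one has $\sum_{i\in\mathbb{N}}|\lambda_i|\le\big\|\{\sum_{i\in\mathbb{N}}[|\lambda_i|\chi_{B_i}/\|\chi_{B_i}\|_{L^{\vec p}(\mathbb{R}^n)}]^{p_-}\}^{1/p_-}\big\|_{L^{\vec p}(\mathbb{R}^n)}$. -/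
/-!
The normalized atoms `g i = |λ i| χ_{B i} / ‖χ_{B i}‖_{L^p⃗}` satisfy `‖g i‖_{L^p⃗} = |λ i|`,
since `‖χ_B‖_{L^p⃗}` is positive and finite for an anisotropic ball `B`, which lies between two
coordinate boxes. For exponents in `(0, 1]` every iterated integral obeys the reverse Minkowski
inequality, so the mixed quasi-norm is superadditive and `∑ |λ i| = ∑ ‖g i‖ ≤ ‖∑ g i‖`.
Finally `∑ g i ≤ (∑ g i ^ p₋) ^ (1 / p₋)` pointwise, again because `p₋ ≤ 1`.
-/

open MeasureTheory ENNReal Filter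

noncomputable section

/-- The anisotropic homogeneous quasi-norm associated with `a`. -/
def anorm {n : ℕ} (a x : Fin n → ℝ) : ℝ :=
  sInf {t : ℝ | 0 < t ∧ ∑ i, x i ^ 2 / t ^ (2 * a i) = 1}

/-- The anisotropic ball with center `x` and radius `r`. -/
def aball {n : ℕ} (a x : Fin n → ℝ) (r : ℝ) : Set (Fin n → ℝ) :=
  {y | anorm a (y - x) < r}

/-- The collection `𝔅` of all anisotropic balls. -/
def aballs {n : ℕ} (a : Fin n → ℝ) : Set (Set (Fin n → ℝ)) :=
  {B | ∃ x r, 0 < r ∧ B = aball a x r}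

/-- Iterated mixed-norm of a nonnegative function: integrate the first variable
with exponent `p 0` (essential supremum if `p 0 = ∞`), then recurse. -/
def mixedNormF : {n : ℕ} → (Fin n → ℝ≥0∞) → ((Fin n → ℝ) → ℝ≥0∞) → ℝ≥0∞
  | 0, _, f => f fun i => i.elim0
  | _ + 1, p, f =>
    mixedNormF (fun i => p i.succ) fun y =>
      if p 0 = ∞ then essSup (fun t => f (Fin.cons t y)) volume
      else (∫⁻ t, f (Fin.cons t y) ^ (p 0).toReal) ^ (1 / (p 0).toReal)

/-- The mixed-norm Lebesgue quasi-norm `‖f‖_{L^{p⃗}(ℝⁿ)}`. -/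
def mixedNorm {n : ℕ} (p : Fin n → ℝ≥0∞) (f : (Fin n → ℝ) → ℂ) : ℝ≥0∞ :=
  mixedNormF p fun x => (‖f x‖₊ : ℝ≥0∞)

/-- `‖χ_B‖_{L^{p⃗}(ℝⁿ)}`. -/
def chiNorm {n : ℕ} (p : Fin n → ℝ≥0∞) (B : Set (Fin n → ℝ)) : ℝ≥0∞ :=
  mixedNormF p (B.indicator fun _ => 1)

/-- `P` is (the function given by) a polynomial on `ℝⁿ` of total degree at most `s`. -/
def IsPolyDeg {n : ℕ} (s : ℕ) (P : (Fin n → ℝ) → ℂ) : Prop :=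
  ∃ Q : MvPolynomial (Fin n) ℂ, Q.totalDegree ≤ s ∧
    ∀ x, P x = MvPolynomial.eval (fun i => (x i : ℂ)) Q

/-- The anisotropic mixed-norm Campanato quasi-norm `‖g‖_{𝓛^{a⃗}_{p⃗,q,s}(ℝⁿ)}`. -/
def campanatoNorm {n : ℕ} (a : Fin n → ℝ) (p : Fin n → ℝ≥0∞) (q : ℝ≥0∞) (s : ℕ)
    (g : (Fin n → ℝ) → ℂ) : ℝ≥0∞ :=
  ⨆ B ∈ aballs a, ⨅ P ∈ {P : (Fin n → ℝ) → ℂ | IsPolyDeg s P},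
    volume B / chiNorm p B *
      (if q = ∞ then essSup (fun x => (‖g x - P x‖₊ : ℝ≥0∞)) (volume.restrict B)
       else ((volume B)⁻¹ * ∫⁻ x in B, (‖g x - P x‖₊ : ℝ≥0∞) ^ q.toReal) ^ (1 / q.toReal))

/-- Local `q`-integrability on `ℝⁿ`. -/
def LocLp {n : ℕ} (q : ℝ≥0∞) (g : (Fin n → ℝ) → ℂ) : Prop :=
  ∀ K : Set (Fin n → ℝ), IsCompact K → MemLp g q (volume.restrict K)

/-- The homogeneous dimension `ν = a_1 + ⋯ + a_n`. -/
def nuTotal {n : ℕ} (a : Fin n → ℝ) : ℝ := ∑ i, a i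

/-- `a₋ = min {a_1, …, a_n}`. -/
def aMin {n : ℕ} (a : Fin n → ℝ) : ℝ := ⨅ i, a i

/-- `p₋ = min {p_1, …, p_n}`. -/
def pMinE {n : ℕ} (p : Fin n → ℝ≥0∞) : ℝ≥0∞ := ⨅ i, p i

/-- An anisotropic mixed-norm `(p⃗, r, s)`-atom supported on the anisotropic ball `B`. -/
structure IsAtomFn {n : ℕ} (a : Fin n → ℝ) (p : Fin n → ℝ≥0∞) (r : ℝ≥0∞) (s : ℕ)
    (f : (Fin n → ℝ) → ℂ) (B : Set (Fin n → ℝ)) : Prop where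
  measurable : Measurable f
  ball_mem : B ∈ aballs a
  support_subset : Function.support f ⊆ B
  size : eLpNorm f r volume ≤ volume B ^ (1 / r).toReal / chiNorm p B
  moments : ∀ α : Fin n → ℕ, (∑ i, α i) ≤ s → (∫ x, f x * ∏ i, (x i : ℂ) ^ α i) = 0

/-- The quantity `‖{∑_i [|λ_i| χ_{B_i} / ‖χ_{B_i}‖]^{p₋}}^{1/p₋}‖_{L^{p⃗}}` for a sequence. -/
def atomSeqNorm {n : ℕ} (p : Fin n → ℝ≥0∞) (lam : ℕ → ℂ) (B : ℕ → Set (Fin n → ℝ)) : ℝ≥0∞ :=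
  mixedNormF p fun x =>
    (∑' i, ((‖lam i‖₊ : ℝ≥0∞) * (B i).indicator (fun _ => 1) x / chiNorm p (B i))
        ^ (pMinE p).toReal) ^ (1 / (pMinE p).toReal)

/-- The quantity `‖{∑_{i=1}^m [|λ_i| χ_{B_i} / ‖χ_{B_i}‖]^{p₋}}^{1/p₋}‖_{L^{p⃗}}`
for a finite family. -/
def atomFinNorm {n : ℕ} (p : Fin n → ℝ≥0∞) {m : ℕ} (lam : Fin m → ℂ)
    (B : Fin m → Set (Fin n → ℝ)) : ℝ≥0∞ :=
  mixedNormF p fun x =>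
    (∑ i, ((‖lam i‖₊ : ℝ≥0∞) * (B i).indicator (fun _ => 1) x / chiNorm p (B i))
        ^ (pMinE p).toReal) ^ (1 / (pMinE p).toReal)

/-- Tempered distributions on `ℝⁿ`. -/
abbrev TDist (n : ℕ) := SchwartzMap (Fin n → ℝ) ℂ →L[ℂ] ℂ

/-- `T = ∑_i λ_i a_i` in `𝒮'(ℝⁿ)` with the `a_i` being `(p⃗,r,s)`-atoms on balls `B i`. -/
def HasAtomicRep {n : ℕ} (a : Fin n → ℝ) (p : Fin n → ℝ≥0∞) (r : ℝ≥0∞) (s : ℕ)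
    (T : TDist n) (lam : ℕ → ℂ) (A : ℕ → (Fin n → ℝ) → ℂ)
    (B : ℕ → Set (Fin n → ℝ)) : Prop :=
  (∀ i, IsAtomFn a p r s (A i) (B i)) ∧
    ∀ φ : SchwartzMap (Fin n → ℝ) ℂ,
      Filter.Tendsto (fun N => ∑ i ∈ Finset.range N, lam i * ∫ x, A i x * φ x)
        Filter.atTop (nhds (T φ))

/-- Membership in the anisotropic mixed-norm atomic Hardy space. -/
def MemHardy {n : ℕ} (a : Fin n → ℝ) (p : Fin n → ℝ≥0∞) (r : ℝ≥0∞) (s : ℕ)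
    (T : TDist n) : Prop :=
  ∃ lam A B, HasAtomicRep a p r s T lam A B

/-- The atomic Hardy space quasi-norm. -/
def hardyNorm {n : ℕ} (a : Fin n → ℝ) (p : Fin n → ℝ≥0∞) (r : ℝ≥0∞) (s : ℕ)
    (T : TDist n) : ℝ≥0∞ :=
  ⨅ (lam : ℕ → ℂ) (A : ℕ → (Fin n → ℝ) → ℂ) (B : ℕ → Set (Fin n → ℝ))
    (_ : HasAtomicRep a p r s T lam A B), atomSeqNorm p lam B

/-- `‖L‖ = sup {|L f| : f ∈ H, ‖f‖_H ≤ 1}`. -/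
def hardyOpNorm {n : ℕ} (a : Fin n → ℝ) (p : Fin n → ℝ≥0∞) (r : ℝ≥0∞) (s : ℕ)
    (L : TDist n → ℂ) : ℝ≥0∞ :=
  ⨆ T ∈ {T : TDist n | MemHardy a p r s T ∧ hardyNorm a p r s T ≤ 1}, (‖L T‖₊ : ℝ≥0∞)

/-- `P = Π_B f` is the natural projection of `f` onto polynomials of degree at most `s`
relative to `B`. -/
def IsProj {n : ℕ} (s : ℕ) (B : Set (Fin n → ℝ)) (f P : (Fin n → ℝ) → ℂ) : Prop :=
  IsPolyDeg s P ∧ ∀ q : (Fin n → ℝ) → ℂ, IsPolyDeg s q →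
    (∫ x in B, P x * q x) = ∫ x in B, f x * q x


open Set Topology

theorem ENNReal.tsum_le_rpow_tsum_rpow {ι : Type*} (u : ι → ℝ≥0∞) {q : ℝ} (hq : 0 < q)
    (hq1 : q ≤ 1) : ∑' i, u i ≤ (∑' i, u i ^ q) ^ (1 / q) := by
  rw [ENNReal.tsum_eq_iSup_sum, one_div]
  refine iSup_le fun s => (ENNReal.le_rpow_inv_iff hq).2 ?_
  exact (Finset.le_sum_of_subadditive (· ^ q) (ENNReal.zero_rpow_of_pos hq).le
    (fun x y => ENNReal.rpow_add_le_add_rpow x y hq.le hq1) s u).trans (ENNReal.sum_le_tsum s)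

theorem ENNReal.mul_div_rpow_add_mul_div_rpow_le {A C : ℝ≥0∞} (hA0 : A ≠ 0) (hA : A ≠ ∞)
    (hC0 : C ≠ 0) (hC : C ≠ ∞) {q : ℝ} (hq : 0 < q) (hq1 : q ≤ 1) (x y : ℝ≥0∞) :
    A * (x / A) ^ q + C * (y / C) ^ q ≤ (A + C) ^ (1 - q) * (x + y) ^ q := by
  have hcancel : ∀ {D : ℝ≥0∞} (z : ℝ≥0∞), D ≠ 0 → D ≠ ∞ → D * ((z / D) ^ q) ^ q⁻¹ = z :=
    fun z h0 h => by rw [ENNReal.rpow_rpow_inv hq.ne', ENNReal.mul_div_cancel h0 h]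
  simpa [Fin.sum_univ_two, hcancel x hA0 hA, hcancel y hC0 hC] using
    ENNReal.inner_le_weight_mul_Lp_of_nonneg Finset.univ ((one_le_inv₀ hq).2 hq1) ![A, C]
      ![(x / A) ^ q, (y / C) ^ q]

section Lintegral

variable {α : Type*} [MeasurableSpace α] {μ : Measure α} {q : ℝ}

theorem ENNReal.lintegral_rpow_div_Lp_eq_one (hq : 0 < q) {H : α → ℝ≥0∞}
    (h0 : (∫⁻ t, H t ^ q ∂μ) ^ (1 / q) ≠ 0) (htop : (∫⁻ t, H t ^ q ∂μ) ^ (1 / q) ≠ ∞) :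
    ∫⁻ t, (H t / (∫⁻ t, H t ^ q ∂μ) ^ (1 / q)) ^ q ∂μ = 1 := by
  set D := (∫⁻ t, H t ^ q ∂μ) ^ (1 / q) with hD
  have hDq : D ^ q = ∫⁻ t, H t ^ q ∂μ := by rw [hD, one_div, ENNReal.rpow_inv_rpow hq.ne']
  have hDq0 : D ^ q ≠ 0 := (ENNReal.rpow_pos (pos_iff_ne_zero.2 h0) htop).ne'
  simp_rw [ENNReal.div_rpow_of_nonneg _ _ hq.le, div_eq_mul_inv]
  rw [lintegral_mul_const' _ _ (ENNReal.inv_ne_top.2 hDq0), ← hDq,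
    ENNReal.mul_inv_cancel hDq0 (ENNReal.rpow_ne_top_of_nonneg hq.le htop)]

theorem ENNReal.lintegral_Lp_add_lintegral_Lp_le_of_le_one (hq : 0 < q) (hq1 : q ≤ 1)
    (F G : α → ℝ≥0∞) :
    (∫⁻ t, F t ^ q ∂μ) ^ (1 / q) + (∫⁻ t, G t ^ q ∂μ) ^ (1 / q)
      ≤ (∫⁻ t, (F t + G t) ^ q ∂μ) ^ (1 / q) := by
  have hmono : ∀ {H : α → ℝ≥0∞}, H ≤ (fun t => F t + G t) →
      (∫⁻ t, H t ^ q ∂μ) ^ (1 / q) ≤ (∫⁻ t, (F t + G t) ^ q ∂μ) ^ (1 / q) := fun h =>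
    ENNReal.rpow_le_rpow (lintegral_mono fun t => ENNReal.rpow_le_rpow (h t) hq.le)
      (one_div_nonneg.2 hq.le)
  set A := (∫⁻ t, F t ^ q ∂μ) ^ (1 / q)
  set C := (∫⁻ t, G t ^ q ∂μ) ^ (1 / q)
  set R := (∫⁻ t, (F t + G t) ^ q ∂μ) ^ (1 / q) with hR
  have hAR : A ≤ R := hmono fun t => le_self_add
  have hCR : C ≤ R := hmono fun t => le_add_self
  rcases eq_or_ne A 0 with hA0 | hA0
  · simpa [hA0] using hCR
  rcases eq_or_ne C 0 with hC0 | hC0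
  · simpa [hC0] using hAR
  rcases eq_or_ne A ∞ with hA | hA
  · exact le_top.trans (by rwa [hA] at hAR)
  rcases eq_or_ne C ∞ with hC | hC
  · exact le_top.trans (by rwa [hC] at hCR)
  have hAC0 : A + C ≠ 0 := by simp [hA0]
  have hAC : A + C ≠ ∞ := ENNReal.add_ne_top.2 ⟨hA, hC⟩
  have hACq0 : (A + C) ^ (1 - q) ≠ 0 := (ENNReal.rpow_pos (pos_iff_ne_zero.2 hAC0) hAC).ne'
  have hACq : (A + C) ^ (1 - q) ≠ ∞ := ENNReal.rpow_ne_top_of_nonneg (by linarith) hAC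
  -- integrate the weighted Hölder inequality for `F / A` and `G / C`, which have quasi-norm `1`
  have key : (A + C) ^ (1 - q) * (A + C) ^ q ≤ (A + C) ^ (1 - q) * R ^ q :=
    calc (A + C) ^ (1 - q) * (A + C) ^ q
        = A * ∫⁻ t, (F t / A) ^ q ∂μ + C * ∫⁻ t, (G t / C) ^ q ∂μ := by
          rw [← ENNReal.rpow_add _ _ hAC0 hAC, sub_add_cancel, ENNReal.rpow_one,
            ENNReal.lintegral_rpow_div_Lp_eq_one hq hA0 hA,
            ENNReal.lintegral_rpow_div_Lp_eq_one hq hC0 hC, mul_one, mul_one]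
      _ ≤ ∫⁻ t, (A * (F t / A) ^ q + C * (G t / C) ^ q) ∂μ := by
          rw [← lintegral_const_mul' _ _ hA, ← lintegral_const_mul' _ _ hC]
          exact le_lintegral_add _ _
      _ ≤ ∫⁻ t, (A + C) ^ (1 - q) * (F t + G t) ^ q ∂μ := lintegral_mono fun t =>
          ENNReal.mul_div_rpow_add_mul_div_rpow_le hA0 hA hC0 hC hq hq1 _ _
      _ = (A + C) ^ (1 - q) * R ^ q := by
          rw [lintegral_const_mul' _ _ hACq, hR, one_div, ENNReal.rpow_inv_rpow hq.ne']
  exact (ENNReal.rpow_le_rpow_iff hq).1 ((ENNReal.mul_le_mul_iff_right hACq0 hACq).1 key)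

end Lintegral

theorem mixedNormF_mono : ∀ {n : ℕ} (p : Fin n → ℝ≥0∞) {f g : (Fin n → ℝ) → ℝ≥0∞},
    f ≤ g → mixedNormF p f ≤ mixedNormF p g
  | 0, _, _, _, h => h _
  | _ + 1, _, _, _, h => by
    simp only [mixedNormF]
    refine mixedNormF_mono _ fun y => ?_
    split_ifs
    · exact essSup_mono_ae (.of_forall fun t => h _)
    · exact ENNReal.rpow_le_rpow (lintegral_mono fun t => ENNReal.rpow_le_rpow (h _)
        ENNReal.toReal_nonneg) (one_div_nonneg.2 ENNReal.toReal_nonneg)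

theorem mixedNormF_const_mul : ∀ {n : ℕ} {p : Fin n → ℝ≥0∞}, (∀ i, p i ≠ 0) →
    ∀ {c : ℝ≥0∞}, c ≠ ∞ → ∀ f : (Fin n → ℝ) → ℝ≥0∞,
    mixedNormF p (fun x => c * f x) = c * mixedNormF p f
  | 0, _, _, _, _, _ => rfl
  | _ + 1, p, hp, c, hc, f => by
    simp only [mixedNormF]
    rw [← mixedNormF_const_mul (fun i => hp i.succ) hc]
    congr 1
    funext y
    split_ifs with hp0
    · exact ENNReal.essSup_const_mul
    · have hq : 0 < (p 0).toReal := ENNReal.toReal_pos (hp 0) hp0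
      simp_rw [ENNReal.mul_rpow_of_nonneg _ _ hq.le]
      rw [lintegral_const_mul' _ _ (ENNReal.rpow_ne_top_of_nonneg hq.le hc),
        ENNReal.mul_rpow_of_nonneg _ _ (one_div_nonneg.2 hq.le), one_div,
        ENNReal.rpow_rpow_inv hq.ne']

theorem mixedNormF_add_le : ∀ {n : ℕ} {p : Fin n → ℝ≥0∞}, (∀ i, 0 < p i) → (∀ i, p i ≤ 1) →
    ∀ f g : (Fin n → ℝ) → ℝ≥0∞,
    mixedNormF p f + mixedNormF p g ≤ mixedNormF p (fun x => f x + g x)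
  | 0, _, _, _, _, _ => le_rfl
  | _ + 1, p, hp0, hp1, f, g => by
    have hp : p 0 ≠ ∞ := ne_top_of_le_ne_top one_ne_top (hp1 0)
    simp only [mixedNormF, if_neg hp]
    refine (mixedNormF_add_le (fun i => hp0 i.succ) (fun i => hp1 i.succ) _ _).trans
      (mixedNormF_mono _ fun y => ?_)
    exact ENNReal.lintegral_Lp_add_lintegral_Lp_le_of_le_one (ENNReal.toReal_pos (hp0 0).ne' hp)
      (by simpa using ENNReal.toReal_mono one_ne_top (hp1 0)) _ _

theorem mixedNormF_sum_le {n : ℕ} {p : Fin n → ℝ≥0∞} (hp0 : ∀ i, 0 < p i) (hp1 : ∀ i, p i ≤ 1)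
    {ι : Type*} (g : ι → (Fin n → ℝ) → ℝ≥0∞) (s : Finset ι) :
    ∑ i ∈ s, mixedNormF p (g i) ≤ mixedNormF p (fun x => ∑ i ∈ s, g i x) := by
  classical
  induction s using Finset.induction_on with
  | empty => exact zero_le
  | insert i s hi ih =>
    simp only [Finset.sum_insert hi]
    exact (add_le_add_right ih _).trans (mixedNormF_add_le hp0 hp1 _ _)

theorem mixedNormF_tsum_le {n : ℕ} {p : Fin n → ℝ≥0∞} (hp0 : ∀ i, 0 < p i)
    (hp1 : ∀ i, p i ≤ 1) {ι : Type*} (g : ι → (Fin n → ℝ) → ℝ≥0∞) :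
    ∑' i, mixedNormF p (g i) ≤ mixedNormF p (fun x => ∑' i, g i x) := by
  rw [ENNReal.tsum_eq_iSup_sum]
  exact iSup_le fun s => (mixedNormF_sum_le hp0 hp1 g s).trans
    (mixedNormF_mono p fun x => ENNReal.sum_le_tsum s)

theorem chiNorm_mono {n : ℕ} (p : Fin n → ℝ≥0∞) {s t : Set (Fin n → ℝ)} (hst : s ⊆ t) :
    chiNorm p s ≤ chiNorm p t :=
  mixedNormF_mono p (indicator_le_indicator_of_subset hst fun _ => zero_le)

theorem chiNorm_pi_Ioo : ∀ {n : ℕ} {p : Fin n → ℝ≥0∞},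
    (∀ i, p i ≠ 0) → (∀ i, p i ≠ ∞) → ∀ c d : Fin n → ℝ,
    chiNorm p (univ.pi fun i => Ioo (c i) (d i))
      = ∏ i, ENNReal.ofReal (d i - c i) ^ (1 / (p i).toReal)
  | 0, _, _, _, _, _ => by simp [chiNorm, mixedNormF]
  | _ + 1, p, hp0, hp, c, d => by
    simp only [chiNorm, mixedNormF, if_neg (hp 0)]
    set q := (p 0).toReal
    have hq : 0 < q := ENNReal.toReal_pos (hp0 0) (hp 0)
    set K := ENNReal.ofReal (d 0 - c 0) ^ (1 / q)
    have hslice : ∀ y, (∫⁻ t, ((univ.pi fun i => Ioo (c i) (d i)).indicator (fun _ => 1)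
        (Fin.cons t y : Fin _ → ℝ)) ^ q) ^ (1 / q)
          = K * (univ.pi fun i => Ioo (c i.succ) (d i.succ)).indicator (fun _ => 1) y := by
      intro y
      set v : ℝ≥0∞ := (univ.pi fun i => Ioo (c i.succ) (d i.succ)).indicator (fun _ => 1) y
      have hcons : ∀ t, (univ.pi fun i => Ioo (c i) (d i)).indicator (fun _ => 1)
          (Fin.cons t y : Fin _ → ℝ) = (Ioo (c 0) (d 0)).indicator (fun _ => v) t := fun t => by
        simp [v, indicator, Fin.forall_fin_succ, ite_and]
      have hpow : ∀ t, ((Ioo (c 0) (d 0)).indicator (fun _ => v) t) ^ q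
          = (Ioo (c 0) (d 0)).indicator (fun _ => v ^ q) t := fun t =>
        congrFun (indicator_comp_of_zero (g := (· ^ q)) (ENNReal.zero_rpow_of_pos hq)).symm t
      simp only [hcons, hpow]
      rw [lintegral_indicator_const measurableSet_Ioo, Real.volume_Ioo,
        ENNReal.mul_rpow_of_nonneg _ _ (one_div_nonneg.2 hq.le), one_div q,
        ENNReal.rpow_rpow_inv hq.ne', ← one_div, mul_comm]
    simp only [hslice]
    rw [mixedNormF_const_mul (fun i => hp0 i.succ)
      (ENNReal.rpow_ne_top_of_nonneg (one_div_nonneg.2 hq.le) ofReal_ne_top), Fin.prod_univ_succ]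
    exact congrArg (K * ·) (chiNorm_pi_Ioo (fun i => hp0 i.succ) (fun i => hp i.succ) _ _)

theorem sq_div_rpow_two_mul {t : ℝ} (ht : 0 ≤ t) (z s : ℝ) :
    z ^ 2 / t ^ (2 * s) = (z / t ^ s) ^ 2 := by
  rw [div_pow, mul_comm, Real.rpow_mul ht, Real.rpow_two]

-- `anorm a z` is the infimum of the positive roots `t` of `anormSum a z t = 1`.
def anormSum {n : ℕ} (a z : Fin n → ℝ) (t : ℝ) : ℝ := ∑ i, z i ^ 2 / t ^ (2 * a i)

section AnisotropicBall

variable {n : ℕ} {a : Fin n → ℝ}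

theorem anormSum_strictAntiOn (ha : ∀ i, 0 < a i) {z : Fin n → ℝ} (hz : z ≠ 0) :
    StrictAntiOn (anormSum a z) (Ioi 0) := by
  intro t ht r _ htr
  obtain ⟨j, hj⟩ : ∃ j, z j ≠ 0 := Function.ne_iff.1 hz
  have hpow : ∀ i, t ^ (2 * a i) < r ^ (2 * a i) := fun i =>
    Real.rpow_lt_rpow (le_of_lt ht) htr (by linarith [ha i])
  refine Finset.sum_lt_sum (fun i _ => ?_) ⟨j, Finset.mem_univ j, ?_⟩
  · exact div_le_div_of_nonneg_left (sq_nonneg _) (Real.rpow_pos_of_pos ht _) (hpow i).le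
  · exact div_lt_div_of_pos_left (by positivity) (Real.rpow_pos_of_pos ht _) (hpow j)

theorem continuousOn_anormSum (z : Fin n → ℝ) : ContinuousOn (anormSum a z) (Ioi 0) :=
  continuousOn_finsetSum _ fun _ _ => continuousOn_const.div
    (continuousOn_id.rpow_const fun _ ht => Or.inl (ne_of_gt ht))
    fun _ ht => (Real.rpow_pos_of_pos ht _).ne'

theorem tendsto_anormSum_atTop (ha : ∀ i, 0 < a i) (z : Fin n → ℝ) :
    Tendsto (anormSum a z) atTop (𝓝 0) := by
  unfold anormSum
  simpa using tendsto_finsetSum Finset.univ fun i _ =>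
    (tendsto_const_nhds (x := z i ^ 2)).div_atTop (tendsto_rpow_atTop (by linarith [ha i]))

theorem exists_anormSum_eq_one (ha : ∀ i, 0 < a i) {z : Fin n → ℝ} (hz : z ≠ 0) {b : ℝ}
    (hb : 0 < b) (hzb : anormSum a z b < 1) : ∃ t, (0 < t ∧ anormSum a z t = 1) ∧ t < b := by
  obtain ⟨j, hj⟩ : ∃ j, z j ≠ 0 := Function.ne_iff.1 hz
  -- at `t₁` the `j`-th term alone is already `≥ 1`
  set t₁ := min b (|z j| ^ (a j)⁻¹)
  have ht₁ : 0 < t₁ := lt_min hb (Real.rpow_pos_of_pos (abs_pos.2 hj) _)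
  have hzt₁ : 1 ≤ anormSum a z t₁ := by
    have hle : t₁ ^ a j ≤ |z j| :=
      calc t₁ ^ a j ≤ (|z j| ^ (a j)⁻¹) ^ a j :=
            Real.rpow_le_rpow ht₁.le (min_le_right _ _) (ha j).le
        _ = |z j| := Real.rpow_inv_rpow (abs_nonneg _) (ha j).ne'
    calc 1 ≤ (z j / t₁ ^ a j) ^ 2 := by
          rw [← sq_abs, abs_div, abs_of_pos (Real.rpow_pos_of_pos ht₁ _)]
          exact one_le_pow₀ ((one_le_div (Real.rpow_pos_of_pos ht₁ _)).2 hle)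
      _ ≤ anormSum a z t₁ := by
          rw [← sq_div_rpow_two_mul ht₁.le]
          exact Finset.single_le_sum (f := fun i => z i ^ 2 / t₁ ^ (2 * a i))
            (fun i _ => by positivity) (Finset.mem_univ j)
  obtain ⟨t, ht, hzt⟩ := intermediate_value_Icc' (min_le_left _ _)
    ((continuousOn_anormSum z).mono fun s hs => ht₁.trans_le hs.1) ⟨hzb.le, hzt₁⟩
  exact ⟨t, ⟨ht₁.trans_le ht.1, hzt⟩, ht.2.lt_of_ne fun h => hzb.ne (h ▸ hzt)⟩

theorem anorm_lt_iff (ha : ∀ i, 0 < a i) {z : Fin n → ℝ} {r : ℝ} (hr : 0 < r) :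
    anorm a z < r ↔ anormSum a z r < 1 := by
  rcases eq_or_ne z 0 with rfl | hz
  · have h0 : anorm a 0 = 0 := by simp [anorm]
    simp [h0, hr, anormSum]
  have hbdd : BddBelow {t | 0 < t ∧ anormSum a z t = 1} := ⟨0, fun t ht => ht.1.le⟩
  constructor
  · intro h
    obtain ⟨b, hb1, hb⟩ := (((tendsto_anormSum_atTop ha z).eventually (gt_mem_nhds one_pos)).and
      (eventually_gt_atTop 0)).exists
    obtain ⟨t₀, ht₀, -⟩ := exists_anormSum_eq_one ha hz hb hb1
    obtain ⟨t, ht, htr⟩ := (csInf_lt_iff hbdd ⟨t₀, ht₀⟩).1 h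
    exact ht.2 ▸ anormSum_strictAntiOn ha hz ht.1 (ht.1.trans htr) htr
  · intro h
    obtain ⟨t, ht, htr⟩ := exists_anormSum_eq_one ha hz hr h
    exact (csInf_le hbdd ht).trans_lt htr

theorem aball_subset_pi (ha : ∀ i, 0 < a i) (x : Fin n → ℝ) {r : ℝ} (hr : 0 < r) :
    aball a x r ⊆ univ.pi fun i => Ioo (x i - r ^ a i) (x i + r ^ a i) := by
  intro y hy i _
  have hi : ((y i - x i) / r ^ a i) ^ 2 < 1 := by
    rw [← sq_div_rpow_two_mul hr.le]
    exact (Finset.single_le_sum (f := fun i => (y - x) i ^ 2 / r ^ (2 * a i))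
      (fun i _ => by positivity) (Finset.mem_univ i)).trans_lt ((anorm_lt_iff ha hr).1 hy)
  rw [sq_lt_one_iff_abs_lt_one, abs_div, abs_of_pos (Real.rpow_pos_of_pos hr _),
    div_lt_one (Real.rpow_pos_of_pos hr _), abs_sub_lt_iff] at hi
  constructor <;> linarith [hi.1, hi.2]

theorem pi_subset_aball (ha : ∀ i, 0 < a i) (x : Fin n → ℝ) {r : ℝ} (hr : 0 < r) :
    (univ.pi fun i => Ioo (x i - r ^ a i / (n + 1)) (x i + r ^ a i / (n + 1)))
      ⊆ aball a x r := by
  intro y hy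
  have hterm : ∀ i, (y - x) i ^ 2 / r ^ (2 * a i) ≤ 1 / (n + 1) := fun i => by
    have hr' := Real.rpow_pos_of_pos hr (a i)
    obtain ⟨h1, h2⟩ := hy i (mem_univ i)
    have habs : |(y i - x i) / r ^ a i| < 1 / (n + 1) := by
      rw [abs_div, abs_of_pos hr', div_lt_iff₀ hr', one_div_mul_eq_div, abs_sub_lt_iff]
      constructor <;> linarith
    have hle_one : |(y i - x i) / r ^ a i| ≤ 1 :=
      habs.le.trans (div_le_one_of_le₀ (by simp) (by positivity))
    rw [Pi.sub_apply, sq_div_rpow_two_mul hr.le, ← sq_abs]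
    exact (pow_le_of_le_one (abs_nonneg _) hle_one two_ne_zero).trans habs.le
  change anorm a (y - x) < r
  rw [anorm_lt_iff ha hr]
  calc anormSum a (y - x) r ≤ ∑ _i : Fin n, 1 / ((n : ℝ) + 1) :=
        Finset.sum_le_sum fun i _ => hterm i
    _ = n / (n + 1) := by simp [div_eq_mul_inv]
    _ < 1 := (div_lt_one (by positivity)).2 (by linarith)

end AnisotropicBall

section ChiNormBall

variable {n : ℕ} {a : Fin n → ℝ} {p : Fin n → ℝ≥0∞} {B : Set (Fin n → ℝ)}

theorem chiNorm_ne_zero_of_mem_aballs (ha : ∀ i, 0 < a i) (hp0 : ∀ i, p i ≠ 0)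
    (hp : ∀ i, p i ≠ ∞) (hB : B ∈ aballs a) : chiNorm p B ≠ 0 := by
  obtain ⟨x, r, hr, rfl⟩ := hB
  refine (lt_of_lt_of_le ?_ (chiNorm_mono p (pi_subset_aball ha x hr))).ne'
  rw [chiNorm_pi_Ioo hp0 hp]
  refine CanonicallyOrderedAdd.prod_pos.2 fun i _ =>
    ENNReal.rpow_pos (ENNReal.ofReal_pos.2 ?_) ofReal_ne_top
  have : 0 < r ^ a i / (n + 1) := by positivity
  linarith

theorem chiNorm_ne_top_of_mem_aballs (ha : ∀ i, 0 < a i) (hp0 : ∀ i, p i ≠ 0)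
    (hp : ∀ i, p i ≠ ∞) (hB : B ∈ aballs a) : chiNorm p B ≠ ∞ := by
  obtain ⟨x, r, hr, rfl⟩ := hB
  refine ne_top_of_le_ne_top ?_ (chiNorm_mono p (aball_subset_pi ha x hr))
  rw [chiNorm_pi_Ioo hp0 hp]
  exact ENNReal.prod_ne_top fun i _ =>
    ENNReal.rpow_ne_top_of_nonneg (one_div_nonneg.2 ENNReal.toReal_nonneg) ofReal_ne_top

theorem mixedNormF_mul_indicator_div_chiNorm (hp0 : ∀ i, p i ≠ 0) (hB0 : chiNorm p B ≠ 0)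
    (hB : chiNorm p B ≠ ∞) {c : ℝ≥0∞} (hc : c ≠ ∞) :
    mixedNormF p (fun x => c * B.indicator (fun _ => 1) x / chiNorm p B) = c := by
  simp_rw [ENNReal.mul_div_right_comm (a := c)]
  rw [mixedNormF_const_mul hp0 (ENNReal.div_ne_top hc hB0)]
  exact ENNReal.div_mul_cancel hB0 hB

end ChiNormBall

theorem toReal_pMinE_mem_Ioc {n : ℕ} (hn : 0 < n) {p : Fin n → ℝ≥0∞} (hp0 : ∀ i, 0 < p i)
    (hp1 : ∀ i, p i ≤ 1) : (pMinE p).toReal ∈ Ioc 0 1 := by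
  have : Nonempty (Fin n) := ⟨⟨0, hn⟩⟩
  obtain ⟨j, hj⟩ := exists_eq_ciInf_of_finite (f := p)
  rw [pMinE, ← hj]
  exact ⟨ENNReal.toReal_pos (hp0 j).ne' (ne_top_of_le_ne_top one_ne_top (hp1 j)),
    by simpa using ENNReal.toReal_mono one_ne_top (hp1 j)⟩

theorem statement3 {n : ℕ} (hn : 0 < n) (a : Fin n → ℝ) (ha : ∀ i, 1 ≤ a i)
    (p : Fin n → ℝ≥0∞) (hp0 : ∀ i, 0 < p i) (hp1 : ∀ i, p i ≤ 1)
    (lam : ℕ → ℂ) (B : ℕ → Set (Fin n → ℝ)) (hB : ∀ i, B i ∈ aballs a) :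
    ∑' i, (‖lam i‖₊ : ℝ≥0∞) ≤ atomSeqNorm p lam B := by
  obtain ⟨hq, hq1⟩ := toReal_pMinE_mem_Ioc hn hp0 hp1
  have ha' : ∀ i, 0 < a i := fun i => zero_lt_one.trans_le (ha i)
  have hp0' : ∀ i, p i ≠ 0 := fun i => (hp0 i).ne'
  have hp : ∀ i, p i ≠ ∞ := fun i => ne_top_of_le_ne_top one_ne_top (hp1 i)
  set g : ℕ → (Fin n → ℝ) → ℝ≥0∞ := fun i x =>
    ‖lam i‖₊ * (B i).indicator (fun _ => 1) x / chiNorm p (B i)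
  calc ∑' i, (‖lam i‖₊ : ℝ≥0∞) = ∑' i, mixedNormF p (g i) := tsum_congr fun i =>
        (mixedNormF_mul_indicator_div_chiNorm hp0'
          (chiNorm_ne_zero_of_mem_aballs ha' hp0' hp (hB i))
          (chiNorm_ne_top_of_mem_aballs ha' hp0' hp (hB i)) coe_ne_top).symm
    _ ≤ mixedNormF p (fun x => ∑' i, g i x) := mixedNormF_tsum_le hp0 hp1 g
    _ ≤ atomSeqNorm p lam B :=
        mixedNormF_mono p fun x => ENNReal.tsum_le_rpow_tsum_rpow _ hq hq1
end
end

section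
/- Let $\vec a=(a_1,\dots,a_n)\in[1,\infty)^n$, $\vec p\in(0,1]^n$, $r\in(1,\infty]$ with conjugate exponent $r'$, and $s\in\mathbb{Z}_+$ with $s\ge\lfloor\frac{\nu}{a_-}(\frac{1}{p_-}-1)\rfloor$, where $\nu:=a_1+\cdots+a_n$, $a_-:=\min_i a_i$, $p_-:=\min_i p_i$. If $a$ is a $(\vec p,r,s)$-atom supported on the anisotropic ball $B\in\mathfrak B$ and $g$ is a locally $r'$-integrable function with $\|g\|_{\mathcal L^{\vec a}_{\vec p,r',s}(\mathbb{R}^n)}<\infty$, then $ag$ is integrable and $\big|\int_{\mathbb{R}^n}a(x)g(x)\,dx\big|\le\|g\|_{\mathcal L^{\vec a}_{\vec p,r',s}(\mathbb{R}^n)}$. -/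
open MeasureTheory ENNReal Filter

noncomputable section

/-!
Because the atom has vanishing moments up to order `s`, `∫ a g = ∫ a (g - P)` for every
polynomial `P` of degree at most `s`. Hölder's inequality on the supporting ball `B` bounds this
by `‖a‖_r ‖g - P‖_{L^{r'}(B)}`, and the size condition `‖a‖_r ≤ |B|^{1/r} / ‖χ_B‖` turns the bound
into exactly the Campanato quantity of `g` on `B` for `P`. Geometrically one only needs that an
anisotropic ball is bounded (so that `a` pairs integrably with `g` and with polynomials) and
contains a coordinate box (so that `‖χ_B‖_{L^{p⃗}} ≠ 0`).
-/

open Set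

section AnisotropicQuasiNorm

variable {n : ℕ} {a : Fin n → ℝ}

def anormEqn (a z : Fin n → ℝ) (t : ℝ) : ℝ := ∑ i, z i ^ 2 / t ^ (2 * a i)

lemma anorm_eq_sInf (a z : Fin n → ℝ) : anorm a z = sInf {t | 0 < t ∧ anormEqn a z t = 1} := rfl

lemma anorm_zero (a : Fin n → ℝ) : anorm a 0 = 0 := by
  simp [anorm_eq_sInf, anormEqn]

lemma continuousOn_anormEqn (a z : Fin n → ℝ) : ContinuousOn (anormEqn a z) (Ioi 0) :=
  continuousOn_finsetSum _ fun _ _ => continuousOn_const.div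
    (fun t ht => (Real.continuousAt_rpow_const t _ (.inl (ne_of_gt ht))).continuousWithinAt)
    fun _ ht => (Real.rpow_pos_of_pos ht _).ne'

lemma div_rpow_le_anormEqn (a z : Fin n → ℝ) {t : ℝ} (ht : 0 < t) (i : Fin n) :
    z i ^ 2 / t ^ (2 * a i) ≤ anormEqn a z t :=
  Finset.single_le_sum (f := fun i => z i ^ 2 / t ^ (2 * a i))
    (fun _ _ => div_nonneg (sq_nonneg _) (Real.rpow_nonneg ht.le _)) (Finset.mem_univ i)

lemma Real.rpow_two_mul {t : ℝ} (ht : 0 ≤ t) (e : ℝ) : t ^ (2 * e) = (t ^ e) ^ 2 := by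
  rw [mul_comm, Real.rpow_mul ht, Real.rpow_two]

lemma exists_anormEqn_eq_one (ha : ∀ i, 0 < a i) {z : Fin n → ℝ} (hz : z ≠ 0) {c : ℝ}
    (hc : 0 < c) (hzc : anormEqn a z c ≤ 1) : ∃ t ∈ Ioc 0 c, anormEqn a z t = 1 := by
  obtain ⟨j, hj⟩ : ∃ j, z j ≠ 0 := Function.ne_iff.1 hz
  have hzj : 0 < |z j| := abs_pos.2 hj
  -- for `t ≤ |z j| ^ (1 / a j)` the `j`-th term alone is at least `1`
  set t₀ := min c (|z j| ^ (a j)⁻¹)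
  have ht₀ : 0 < t₀ := lt_min hc (Real.rpow_pos_of_pos hzj _)
  have hzt₀ : 1 ≤ anormEqn a z t₀ := by
    refine le_trans ?_ (div_rpow_le_anormEqn a z ht₀ j)
    rw [one_le_div (Real.rpow_pos_of_pos ht₀ _), Real.rpow_two_mul ht₀.le, ← sq_abs (z j)]
    gcongr
    calc t₀ ^ a j ≤ (|z j| ^ (a j)⁻¹) ^ a j := by
          gcongr
          · exact (ha j).le
          · exact min_le_right c _
      _ = |z j| := by rw [← Real.rpow_mul hzj.le, inv_mul_cancel₀ (ha j).ne', Real.rpow_one]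
  have hpos : Icc t₀ c ⊆ Ioi 0 := fun t ht => ht₀.trans_le ht.1
  obtain ⟨t, ht, hzt⟩ := intermediate_value_Icc' (min_le_left c _)
    ((continuousOn_anormEqn a z).mono hpos) ⟨hzc, hzt₀⟩
  exact ⟨t, ⟨ht₀.trans_le ht.1, ht.2⟩, hzt⟩

lemma anorm_le_of_anormEqn_le_one (ha : ∀ i, 0 < a i) {z : Fin n → ℝ} {c : ℝ} (hc : 0 < c)
    (hzc : anormEqn a z c ≤ 1) : anorm a z ≤ c := by
  rcases eq_or_ne z 0 with rfl | hz
  · rw [anorm_zero]; exact hc.le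
  obtain ⟨t, ⟨ht, htc⟩, hzt⟩ := exists_anormEqn_eq_one ha hz hc hzc
  have hbdd : BddBelow {t | 0 < t ∧ anormEqn a z t = 1} := ⟨0, fun _ hs => hs.1.le⟩
  exact (csInf_le hbdd ⟨ht, hzt⟩).trans htc

lemma anormEqn_le_one_of_one_le (ha : ∀ i, 1 ≤ a i) (z : Fin n → ℝ) :
    anormEqn a z (max 1 (∑ i, z i ^ 2)) ≤ 1 := by
  set c := max 1 (∑ i, z i ^ 2)
  have hc : 1 ≤ c := le_max_left _ _
  have hc0 : 0 < c := one_pos.trans_le hc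
  calc anormEqn a z c ≤ ∑ i, z i ^ 2 / c ^ 2 := by
        refine Finset.sum_le_sum fun i _ => div_le_div_of_nonneg_left (sq_nonneg _)
          (by positivity) ?_
        rw [← Real.rpow_two]
        exact Real.rpow_le_rpow_of_exponent_le hc (by linarith [ha i])
    _ = (∑ i, z i ^ 2) / c ^ 2 := by rw [Finset.sum_div]
    _ ≤ c / c ^ 2 := by gcongr; exact le_max_right _ _
    _ ≤ 1 := by rw [div_le_one (by positivity)]; nlinarith

-- Since `sInf ∅ = 0`, the hypothesis `anorm a z < R` says nothing until a root of
-- `anormEqn a z t = 1` is known to exist.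
lemma abs_le_of_anorm_lt (ha : ∀ i, 1 ≤ a i) {z : Fin n → ℝ} {R : ℝ} (hzR : anorm a z < R)
    (i : Fin n) : |z i| ≤ max 1 R ^ a i := by
  have ha₀ : ∀ i, 0 < a i := fun i => one_pos.trans_le (ha i)
  rcases eq_or_ne z 0 with rfl | hz
  · simp only [Pi.zero_apply, abs_zero]; positivity
  obtain ⟨t₁, ⟨ht₁, -⟩, hzt₁⟩ := exists_anormEqn_eq_one ha₀ hz
    (one_pos.trans_le (le_max_left _ _)) (anormEqn_le_one_of_one_le ha z)
  have hne : {t | 0 < t ∧ anormEqn a z t = 1}.Nonempty := ⟨t₁, ht₁, hzt₁⟩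
  obtain ⟨t, ⟨ht, hzt⟩, htR⟩ := exists_lt_of_csInf_lt hne hzR
  have hzi : z i ^ 2 ≤ (t ^ a i) ^ 2 := by
    rw [← Real.rpow_two_mul ht.le, ← div_le_one (Real.rpow_pos_of_pos ht _), ← hzt]
    exact div_rpow_le_anormEqn a z ht i
  refine abs_le_of_sq_le_sq (hzi.trans ?_) (by positivity)
  gcongr
  · exact (ha₀ i).le
  · exact htR.le.trans (le_max_right _ _)

lemma exists_forall_abs_lt_anorm_lt (ha : ∀ i, 0 < a i) {R : ℝ} (hR : 0 < R) :
    ∃ ε > 0, ∀ z : Fin n → ℝ, (∀ i, |z i| < ε) → anorm a z < R := by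
  set c := min R 1 / 2 with hc_def
  have hc : 0 < c := by positivity
  have hcR : c < R := (half_lt_self (lt_min hR one_pos)).trans_le (min_le_left _ _)
  have hc1 : c ≤ 1 := by have := min_le_right R 1; linarith
  set ν := ∑ i, a i
  -- this `ε` makes every term of `anormEqn a z c` at most `1 / (n + 1)`
  refine ⟨Real.sqrt (c ^ (2 * ν) / (n + 1)), by positivity, fun z hz => ?_⟩
  refine (anorm_le_of_anormEqn_le_one ha hc ?_).trans_lt hcR
  have hterm : ∀ i, z i ^ 2 / c ^ (2 * a i) ≤ 1 / (n + 1) := by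
    intro i
    have hzi : z i ^ 2 ≤ c ^ (2 * ν) / (n + 1) := by
      rw [← sq_abs]
      exact (Real.lt_sqrt (abs_nonneg _)).1 (hz i) |>.le
    have hνi : c ^ (2 * ν) ≤ c ^ (2 * a i) :=
      Real.rpow_le_rpow_of_exponent_ge hc hc1 (by
        have := Finset.single_le_sum (fun j _ => (ha j).le) (Finset.mem_univ i)
        linarith)
    rw [div_le_div_iff₀ (Real.rpow_pos_of_pos hc _) (by positivity)]
    calc z i ^ 2 * (n + 1) ≤ c ^ (2 * ν) := by
          rwa [le_div_iff₀ (by positivity)] at hzi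
      _ ≤ 1 * c ^ (2 * a i) := by rw [one_mul]; exact hνi
  calc anormEqn a z c ≤ ∑ _i : Fin n, 1 / ((n : ℝ) + 1) := Finset.sum_le_sum fun i _ => hterm i
    _ ≤ 1 := by
      rw [Finset.sum_const, Finset.card_univ, Fintype.card_fin, nsmul_eq_mul, mul_one_div,
        div_le_one (by positivity)]
      linarith

end AnisotropicQuasiNorm

section AnisotropicBall

variable {n : ℕ} {a : Fin n → ℝ}

lemma aball_subset_pi_Icc (ha : ∀ i, 1 ≤ a i) (x : Fin n → ℝ) (R : ℝ) :
    aball a x R ⊆ univ.pi fun i => Icc (x i - max 1 R ^ a i) (x i + max 1 R ^ a i) :=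
  fun y hy => mem_univ_pi.2 fun i => by
    have := abs_le.1 (abs_le_of_anorm_lt ha hy i)
    simp only [Pi.sub_apply] at this
    constructor <;> linarith

lemma exists_pi_Ioo_subset_aball (ha : ∀ i, 0 < a i) (x : Fin n → ℝ) {R : ℝ} (hR : 0 < R) :
    ∃ ε > 0, univ.pi (fun i => Ioo (x i - ε) (x i + ε)) ⊆ aball a x R := by
  obtain ⟨ε, hε, hball⟩ := exists_forall_abs_lt_anorm_lt ha hR
  refine ⟨ε, hε, fun y hy => hball (y - x) fun i => ?_⟩
  have := mem_univ_pi.1 hy i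
  rw [Pi.sub_apply, abs_sub_lt_iff]
  constructor <;> linarith [this.1, this.2]

end AnisotropicBall

section MixedNorm

lemma le_essSup_of_le_on {f : ℝ → ℝ≥0∞} {c : ℝ≥0∞} {l u : ℝ} (hlu : l < u)
    (hf : ∀ t ∈ Ioo l u, c ≤ f t) : c ≤ essSup f volume := by
  have hμ : volume.restrict (Ioo l u) ≠ 0 := by
    simpa [Measure.restrict_eq_zero] using hlu
  calc c = essSup (fun _ => c) (volume.restrict (Ioo l u)) := (essSup_const c hμ).symm
    _ ≤ essSup f (volume.restrict (Ioo l u)) :=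
      essSup_mono_ae ((ae_restrict_iff' measurableSet_Ioo).2 (.of_forall hf))
    _ ≤ essSup f volume := essSup_mono_measure' Measure.restrict_le_self

lemma mul_volume_le_lintegral_rpow {f : ℝ → ℝ≥0∞} {c : ℝ≥0∞} {l u : ℝ}
    (hf : ∀ t ∈ Ioo l u, c ≤ f t) {q : ℝ} (hq : 0 ≤ q) :
    c ^ q * volume (Ioo l u) ≤ ∫⁻ t, f t ^ q :=
  calc c ^ q * volume (Ioo l u) = ∫⁻ _ in Ioo l u, c ^ q := (setLIntegral_const _ _).symm
    _ ≤ ∫⁻ t in Ioo l u, f t ^ q :=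
      setLIntegral_mono' measurableSet_Ioo fun t ht => ENNReal.rpow_le_rpow (hf t ht) hq
    _ ≤ ∫⁻ t, f t ^ q := setLIntegral_le_lintegral _ _

-- No condition on `p` is needed: for `p i = 0` the junk exponent `1 / (p i).toReal = 0` turns the
-- `i`-th factor into `1`.
lemma mixedNormF_pos {n : ℕ} (p : Fin n → ℝ≥0∞) {l u : Fin n → ℝ} (hlu : ∀ i, l i < u i)
    {f : (Fin n → ℝ) → ℝ≥0∞} {c : ℝ≥0∞} (hc : c ≠ 0)
    (hf : ∀ x ∈ univ.pi fun i => Ioo (l i) (u i), c ≤ f x) : 0 < mixedNormF p f := by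
  induction n generalizing c with
  | zero => exact (pos_iff_ne_zero.2 hc).trans_le (hf _ fun i => i.elim0)
  | succ n ih =>
    set q := (p 0).toReal
    refine ih (fun i => p i.succ) (fun i => hlu i.succ)
      (c := if p 0 = ∞ then c else (c ^ q * volume (Ioo (l 0) (u 0))) ^ (1 / q)) ?_ ?_
    · split_ifs
      · exact hc
      · refine (ENNReal.rpow_pos_of_nonneg (mul_pos ?_ ?_) (by positivity)).ne'
        · exact (ENNReal.rpow_pos_of_nonneg (pos_iff_ne_zero.2 hc) ENNReal.toReal_nonneg).ne'
        · simpa using hlu 0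
    · intro y hy
      have hfy : ∀ t ∈ Ioo (l 0) (u 0), c ≤ f (Fin.cons t y) := fun t ht =>
        hf _ (mem_univ_pi.2 (Fin.cases ht fun i => mem_univ_pi.1 hy i))
      split_ifs
      · exact le_essSup_of_le_on (hlu 0) hfy
      · exact ENNReal.rpow_le_rpow (mul_volume_le_lintegral_rpow hfy ENNReal.toReal_nonneg)
          (by positivity)

end MixedNorm

lemma chiNorm_aball_pos {n : ℕ} {a : Fin n → ℝ} (ha : ∀ i, 0 < a i) (p : Fin n → ℝ≥0∞)
    (x : Fin n → ℝ) {R : ℝ} (hR : 0 < R) : 0 < chiNorm p (aball a x R) := by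
  obtain ⟨ε, hε, hsub⟩ := exists_pi_Ioo_subset_aball ha x hR
  refine mixedNormF_pos p (fun i => sub_lt_self (x i) hε |>.trans (lt_add_of_pos_right _ hε))
    one_ne_zero fun y hy => ?_
  rw [indicator_of_mem (hsub hy)]

section Holder

variable {X : Type*} [MeasurableSpace X] {μ : Measure X} {r r' : ℝ≥0∞} [r.HolderConjugate r']
  {f h : X → ℂ}

lemma integrable_mul_of_memLp_restrict {K : Set X} (hK : MeasurableSet K) (hf : MemLp f r μ)
    (hfK : Function.support f ⊆ K) (hh : MemLp h r' (μ.restrict K)) :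
    Integrable (fun x => f x * h x) μ := by
  have hfh : (fun x => f x * h x) = fun x => f x * K.indicator h x := by
    funext x
    by_cases hx : x ∈ K
    · rw [indicator_of_mem hx]
    · rw [Function.notMem_support.1 fun hfx => hx (hfK hfx), zero_mul, zero_mul]
  rw [hfh, ← memLp_one_iff_integrable]
  exact ((memLp_indicator_iff_restrict hK).2 hh).mul' hf

lemma enorm_integral_mul_le_of_support_subset {B : Set X} (hf : AEStronglyMeasurable f μ)
    (hfB : Function.support f ⊆ B) (hh : AEStronglyMeasurable h (μ.restrict B)) :
    ‖∫ x, f x * h x ∂μ‖ₑ ≤ eLpNorm f r μ * eLpNorm h r' (μ.restrict B) :=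
  calc ‖∫ x, f x * h x ∂μ‖ₑ ≤ ∫⁻ x, ‖f x * h x‖ₑ ∂μ := enorm_integral_le_lintegral_enorm _
    _ = eLpNorm (f • h) 1 (μ.restrict B) := by
        rw [eLpNorm_one_eq_lintegral_enorm, setLIntegral_eq_of_support_subset]
        · rfl
        · intro x hx
          refine hfB fun hfx => hx ?_
          simp [hfx]
    _ ≤ eLpNorm f r (μ.restrict B) * eLpNorm h r' (μ.restrict B) :=
        eLpNorm_smul_le_mul_eLpNorm hh hf.restrict
    _ ≤ eLpNorm f r μ * eLpNorm h r' (μ.restrict B) := by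
        gcongr
        exact Measure.restrict_le_self

end Holder

section Polynomials

variable {n : ℕ}

lemma IsPolyDeg.continuous {s : ℕ} {P : (Fin n → ℝ) → ℂ} (hP : IsPolyDeg s P) : Continuous P := by
  obtain ⟨Q, -, hQ⟩ := hP
  rw [funext hQ]
  exact (MvPolynomial.continuous_eval Q).comp
    (continuous_pi fun i => Complex.continuous_ofReal.comp (continuous_apply i))

lemma Continuous.locLp {f : (Fin n → ℝ) → ℂ} (hf : Continuous f) (q : ℝ≥0∞) : LocLp q f :=
  fun K hK => by
    have : IsFiniteMeasure (volume.restrict K) :=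
      isFiniteMeasure_restrict.2 hK.measure_lt_top.ne
    obtain ⟨C, hC⟩ := hK.exists_bound_of_continuousOn hf.continuousOn
    exact MemLp.of_bound hf.aestronglyMeasurable C
      ((ae_restrict_iff' hK.measurableSet).2 (.of_forall hC))

lemma integral_mul_eq_zero_of_isPolyDeg {μ : Measure (Fin n → ℝ)} {f P : (Fin n → ℝ) → ℂ}
    {s : ℕ} (hmom : ∀ α : Fin n → ℕ, ∑ i, α i ≤ s → ∫ x, f x * ∏ i, (x i : ℂ) ^ α i ∂μ = 0)
    (hint : ∀ α : Fin n → ℕ, Integrable (fun x => f x * ∏ i, (x i : ℂ) ^ α i) μ)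
    (hP : IsPolyDeg s P) : ∫ x, f x * P x ∂μ = 0 := by
  obtain ⟨Q, hQs, hQ⟩ := hP
  have hfP : (fun x => f x * P x) = fun x =>
      ∑ d ∈ Q.support, Q.coeff d * (f x * ∏ i, (x i : ℂ) ^ d i) := by
    funext x
    rw [hQ, MvPolynomial.eval_eq', Finset.mul_sum]
    exact Finset.sum_congr rfl fun d _ => by ring
  rw [hfP, integral_finsetSum _ fun (d : Fin n →₀ ℕ) _ => (hint d).const_mul (Q.coeff d)]
  refine Finset.sum_eq_zero fun d hd => ?_
  have hd : ∑ i, d i ≤ s := by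
    rw [← Finsupp.degree_eq_sum]
    exact (MvPolynomial.le_totalDegree hd).trans hQs
  rw [integral_const_mul, hmom d hd, mul_zero]

end Polynomials

lemma ENNReal.rpow_one_sub_div_mul_rpow_eq {V L : ℝ≥0∞} {θ : ℝ} (hV : V ≠ ∞) (hθ : 0 < θ)
    (hVL : V = 0 → L = 0) (c : ℝ≥0∞) : V ^ (1 - θ) / c * L ^ θ = V / c * (V⁻¹ * L) ^ θ := by
  rcases eq_or_ne V 0 with rfl | hV0
  · rw [hVL rfl, ENNReal.zero_rpow_of_pos hθ, mul_zero, ENNReal.zero_div, zero_mul]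
  rw [ENNReal.mul_rpow_of_nonneg _ _ hθ.le, ENNReal.inv_rpow, ENNReal.rpow_sub _ _ hV0 hV,
    ENNReal.rpow_one]
  simp only [div_eq_mul_inv]
  ring

section Atoms

variable {n : ℕ} {a : Fin n → ℝ} {p : Fin n → ℝ≥0∞} {r r' : ℝ≥0∞} {s : ℕ}
  {A : (Fin n → ℝ) → ℂ} {B : Set (Fin n → ℝ)}

lemma IsAtomFn.memLp (hA : IsAtomFn a p r s A B) (hχ : chiNorm p B ≠ 0) (hB : volume B ≠ ∞) :
    MemLp A r volume :=
  ⟨hA.measurable.aestronglyMeasurable, hA.size.trans_lt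
    (ENNReal.div_lt_top (ENNReal.rpow_ne_top_of_nonneg ENNReal.toReal_nonneg hB) hχ)⟩

lemma IsAtomFn.integrable_mul_of_locLp [r.HolderConjugate r'] (hA : IsAtomFn a p r s A B)
    (hχ : chiNorm p B ≠ 0) {K : Set (Fin n → ℝ)} (hK : IsCompact K) (hBK : B ⊆ K)
    {h : (Fin n → ℝ) → ℂ} (hh : LocLp r' h) : Integrable (fun x => A x * h x) volume :=
  integrable_mul_of_memLp_restrict hK.measurableSet
    (hA.memLp hχ (measure_mono hBK |>.trans_lt hK.measure_lt_top).ne)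
    (hA.support_subset.trans hBK) (hh K hK)

lemma IsAtomFn.enorm_integral_mul_le [r.HolderConjugate r'] (hA : IsAtomFn a p r s A B)
    (hr' : r' ≠ ∞) (hB : volume B ≠ ∞) {h : (Fin n → ℝ) → ℂ}
    (hh : AEStronglyMeasurable h (volume.restrict B)) :
    ‖∫ x, A x * h x‖ₑ ≤ volume B / chiNorm p B *
      ((volume B)⁻¹ * ∫⁻ x in B, ‖h x‖ₑ ^ r'.toReal) ^ (1 / r'.toReal) := by
  have hr'0 : r' ≠ 0 := ENNReal.HolderConjugate.ne_zero r' r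
  have hθ : 0 < 1 / r'.toReal := one_div_pos.2 (ENNReal.toReal_pos hr'0 hr')
  have hexp : (1 / r).toReal = 1 - 1 / r'.toReal := by
    rw [one_div, ← ENNReal.HolderConjugate.one_sub_inv r' r, one_div, ← ENNReal.toReal_inv,
      ENNReal.toReal_sub_of_le (ENNReal.inv_le_one.2 (ENNReal.HolderConjugate.one_le r' r))
        ENNReal.one_ne_top, ENNReal.toReal_one]
  calc ‖∫ x, A x * h x‖ₑ ≤ eLpNorm A r volume * eLpNorm h r' (volume.restrict B) :=
        enorm_integral_mul_le_of_support_subset hA.measurable.aestronglyMeasurable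
          hA.support_subset hh
    _ ≤ volume B ^ (1 / r).toReal / chiNorm p B *
          (∫⁻ x in B, ‖h x‖ₑ ^ r'.toReal) ^ (1 / r'.toReal) := by
        rw [eLpNorm_eq_lintegral_rpow_enorm_toReal hr'0 hr']
        gcongr
        exact hA.size
    _ = _ := by
        rw [hexp, ENNReal.rpow_one_sub_div_mul_rpow_eq hB hθ
          fun hB0 => setLIntegral_measure_zero _ _ hB0]

end Atoms

theorem statement5_general {n : ℕ} (a : Fin n → ℝ) (ha : ∀ i, 1 ≤ a i)
    (p : Fin n → ℝ≥0∞) (r r' : ℝ≥0∞) (hr : 1 < r) (hrr' : 1 / r + 1 / r' = 1) (s : ℕ)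
    (A : (Fin n → ℝ) → ℂ) (B : Set (Fin n → ℝ)) (hA : IsAtomFn a p r s A B)
    (g : (Fin n → ℝ) → ℂ) (hg : LocLp r' g) :
    Integrable (fun x => A x * g x) volume ∧
      (‖∫ x, A x * g x‖₊ : ℝ≥0∞) ≤ campanatoNorm a p r' s g := by
  obtain ⟨x₀, R, hR, rfl⟩ := hA.ball_mem
  have : r.HolderConjugate r' := ENNReal.holderConjugate_iff.2 (by simpa only [one_div] using hrr')
  have hr' : r' ≠ ∞ := (ENNReal.HolderConjugate.ne_top_iff_ne_one r' r).2 hr.ne'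
  obtain ⟨K, hK, hBK⟩ : ∃ K, IsCompact K ∧ aball a x₀ R ⊆ K :=
    ⟨_, isCompact_univ_pi fun _ => isCompact_Icc, aball_subset_pi_Icc ha x₀ R⟩
  have hint : ∀ h, LocLp r' h → Integrable (fun x => A x * h x) volume := fun h =>
    hA.integrable_mul_of_locLp (chiNorm_aball_pos (fun i => one_pos.trans_le (ha i)) p x₀ hR).ne'
      hK hBK
  refine ⟨hint g hg, le_iSup₂_of_le _ hA.ball_mem (le_iInf₂ fun P hP => ?_)⟩
  have hmono (α : Fin n → ℕ) : Continuous fun x : Fin n → ℝ => ∏ i, (x i : ℂ) ^ α i := by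
    fun_prop
  have hAP : ∫ x, A x * P x = 0 := integral_mul_eq_zero_of_isPolyDeg hA.moments
    (fun α => hint _ ((hmono α).locLp r')) hP
  have hgP : ∫ x, A x * g x = ∫ x, A x * (g x - P x) := by
    simp only [mul_sub]
    rw [integral_sub (hint g hg) (hint P (hP.continuous.locLp r')), hAP, sub_zero]
  have hgP_meas : AEStronglyMeasurable (fun x => g x - P x) (volume.restrict (aball a x₀ R)) :=
    ((hg K hK).1.sub (hP.continuous.locLp r' K hK).1).mono_measure
      (Measure.restrict_mono hBK le_rfl)
  rw [if_neg hr', hgP]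
  exact hA.enorm_integral_mul_le hr' (measure_mono hBK |>.trans_lt hK.measure_lt_top).ne hgP_meas

theorem statement5 {n : ℕ} (hn : 0 < n) (a : Fin n → ℝ) (ha : ∀ i, 1 ≤ a i)
    (p : Fin n → ℝ≥0∞) (hp0 : ∀ i, 0 < p i) (hp1 : ∀ i, p i ≤ 1)
    (r r' : ℝ≥0∞) (hr : 1 < r) (hrr' : 1 / r + 1 / r' = 1) (s : ℕ)
    (hs : ⌊nuTotal a / aMin a * (1 / (pMinE p).toReal - 1)⌋ ≤ (s : ℤ))
    (A : (Fin n → ℝ) → ℂ) (B : Set (Fin n → ℝ)) (hA : IsAtomFn a p r s A B)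
    (g : (Fin n → ℝ) → ℂ) (hg : LocLp r' g) (hgC : campanatoNorm a p r' s g < ∞) :
    Integrable (fun x => A x * g x) volume ∧
      (‖∫ x, A x * g x‖₊ : ℝ≥0∞) ≤ campanatoNorm a p r' s g :=
  statement5_general a ha p r r' hr hrr' s A B hA g hg
end
end
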